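/- For any z, w ∈ R^K, each coordinate of the softmax satisfies |s(z)_k − s(w)_k| ≤ ‖z − w‖₂; i.e., each coordinate function of softmax is 1-Lipschitz with respect to the Euclidean norm. -/

import Mathlib

open Finset Real

set_option maxHeartbeats 1000000

lemma euclid_abs_le_norm {K : ℕ} (v : EuclideanSpace ℝ (Fin K)) (i : Fin K) :
    |v i| ≤ ‖v‖ := by
  rw [EuclideanSpace.norm_eq]
  have h1 : |v i| = Real.sqrt (‖v i‖ ^ 2) := by
    rw [Real.sqrt_sq_eq_abs]; simp [abs_abs]
  rw [h1]
  apply Real.sqrt_le_sqrt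
  exact Finset.single_le_sum (f := fun j => ‖v j‖ ^ 2)
    (fun j _ => sq_nonneg _) (Finset.mem_univ i)

/-- Each coordinate of the softmax is `1`-Lipschitz with respect to the Euclidean
norm: `|s(z)_k - s(w)_k| ≤ ‖z - w‖₂`. -/
theorem softmax_coord_one_lipschitz (K : ℕ) (hK : 0 < K)
    (z w : EuclideanSpace ℝ (Fin K)) (k : Fin K) :
    |Real.exp (z k) / (∑ j, Real.exp (z j)) -
      Real.exp (w k) / (∑ j, Real.exp (w j))| ≤ ‖z - w‖ := by
  set S : EuclideanSpace ℝ (Fin K) → ℝ := fun x => ∑ j, Real.exp (x j) with hS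
  have hSpos : ∀ x, 0 < S x := fun x =>
    Finset.sum_pos (fun j _ => Real.exp_pos _) ⟨⟨0, hK⟩, Finset.mem_univ _⟩
  set f : EuclideanSpace ℝ (Fin K) → ℝ := fun x => Real.exp (x k) / S x with hf
  set D : EuclideanSpace ℝ (Fin K) → (EuclideanSpace ℝ (Fin K) →L[ℝ] ℝ) := fun x =>
    Real.exp (x k) • ((-(S x ^ 2)⁻¹) • (∑ j, Real.exp (x j) • EuclideanSpace.proj (𝕜 := ℝ) j))
      + (S x)⁻¹ • (Real.exp (x k) • EuclideanSpace.proj (𝕜 := ℝ) k) with hD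
  have hderiv : ∀ x, HasFDerivAt f (D x) x := by
    intro x
    have hN : HasFDerivAt (fun y : EuclideanSpace ℝ (Fin K) => Real.exp (y k))
        (Real.exp (x k) • EuclideanSpace.proj (𝕜 := ℝ) k) x := by
      exact (Real.hasDerivAt_exp (x k)).comp_hasFDerivAt x
        (EuclideanSpace.proj (𝕜 := ℝ) k).hasFDerivAt
    have hSd : HasFDerivAt S (∑ j, Real.exp (x j) • EuclideanSpace.proj (𝕜 := ℝ) j) x := by
      apply HasFDerivAt.fun_sum
      intro j _
      exact (Real.hasDerivAt_exp (x j)).comp_hasFDerivAt x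
        (EuclideanSpace.proj (𝕜 := ℝ) j).hasFDerivAt
    have hInv : HasFDerivAt (fun y => (S y)⁻¹)
        ((-(S x ^ 2)⁻¹) • (∑ j, Real.exp (x j) • EuclideanSpace.proj (𝕜 := ℝ) j)) x :=
      (hasDerivAt_inv (ne_of_gt (hSpos x))).comp_hasFDerivAt x hSd
    simp only [hf, div_eq_mul_inv]
    exact hN.mul hInv
  have hbound : ∀ x, ‖D x‖ ≤ 1 := by
    intro x
    apply ContinuousLinearMap.opNorm_le_bound _ zero_le_one
    intro v
    set p : Fin K → ℝ := fun j => Real.exp (x j) / S x with hp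
    have hpnn : ∀ j, 0 ≤ p j := fun j => div_nonneg (Real.exp_pos _).le (hSpos x).le
    have hpsum : ∑ j, p j = 1 := by
      rw [hp, ← Finset.sum_div]; exact div_self (ne_of_gt (hSpos x))
    have hpk1 : p k ≤ 1 := by
      rw [← hpsum]
      exact Finset.single_le_sum (fun j _ => hpnn j) (Finset.mem_univ k)
    have hsum : ∑ j, p j * v j = (∑ j, Real.exp (x j) * v j) / S x := by
      rw [Finset.sum_div]
      exact Finset.sum_congr rfl fun j _ => by rw [hp]; ring
    have hne : S x ≠ 0 := ne_of_gt (hSpos x)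
    have happ : (D x) v = Real.exp (x k) * (-(S x ^ 2)⁻¹ * (∑ j, Real.exp (x j) * v j))
        + (S x)⁻¹ * (Real.exp (x k) * v k) := by
      simp only [hD, ContinuousLinearMap.add_apply, ContinuousLinearMap.smul_apply,
        ContinuousLinearMap.sum_apply, PiLp.proj_apply, smul_eq_mul]
    have hDv : (D x) v = p k * v k - p k * ∑ j, p j * v j := by
      rw [happ, hsum, hp]
      field_simp
      ring
    rw [Real.norm_eq_abs, hDv]
    have key : p k * v k - p k * ∑ j, p j * v j
        = ∑ j ∈ Finset.univ.erase k, p k * p j * (v k - v j) := by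
      rw [Finset.sum_erase _ (by ring)]
      have : ∑ j, p k * p j * (v k - v j)
          = p k * v k * (∑ j, p j) - p k * ∑ j, p j * v j := by
        rw [Finset.mul_sum, Finset.mul_sum, ← Finset.sum_sub_distrib]
        exact Finset.sum_congr rfl fun j _ => by ring
      rw [this, hpsum]; ring
    rw [key]
    calc |∑ j ∈ Finset.univ.erase k, p k * p j * (v k - v j)|
        ≤ ∑ j ∈ Finset.univ.erase k, |p k * p j * (v k - v j)| :=
          Finset.abs_sum_le_sum_abs _ _
      _ ≤ ∑ j ∈ Finset.univ.erase k, p k * p j * (2 * ‖v‖) := by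
          apply Finset.sum_le_sum
          intro j _
          rw [abs_mul, abs_mul, abs_of_nonneg (hpnn k), abs_of_nonneg (hpnn j)]
          apply mul_le_mul_of_nonneg_left _ (mul_nonneg (hpnn k) (hpnn j))
          calc |v k - v j| ≤ |v k| + |v j| := abs_sub _ _
            _ ≤ ‖v‖ + ‖v‖ := add_le_add (euclid_abs_le_norm v k) (euclid_abs_le_norm v j)
            _ = 2 * ‖v‖ := by ring
      _ = p k * (1 - p k) * (2 * ‖v‖) := by
          rw [← Finset.sum_mul]
          congr 1
          rw [← Finset.mul_sum, Finset.sum_erase_eq_sub (Finset.mem_univ k), hpsum]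
      _ ≤ 1 * ‖v‖ := by
          have h14 : p k * (1 - p k) ≤ 1 / 2 := by nlinarith [sq_nonneg (1 - 2 * p k)]
          have := mul_le_mul_of_nonneg_right h14 (by positivity : (0:ℝ) ≤ 2 * ‖v‖)
          linarith
  have := Convex.norm_image_sub_le_of_norm_hasFDerivWithin_le
    (f := f) (f' := D) (s := Set.univ) (C := 1)
    (fun x _ => (hderiv x).hasFDerivWithinAt)
    (fun x _ => hbound x) convex_univ (Set.mem_univ w) (Set.mem_univ z)
  simpa [hf, Real.norm_eq_abs] using this
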